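/- Let φ: B_R \ {0} → ℝ be a harmonic function on the punctured disk of radius R in ℝ², of the form φ(r,ψ) = φ_P(r,ψ) + (Q/(2π)) ln r + Σ_{n≥1} b_n r^{-n} sin(nψ + c_n), where φ_P is smooth and bounded on all of B_R. If the integral ∫_{B_R} e^{2φ} dA (the conformal area) is finite, then b_n = 0 for all n ≥ 1 and Q > −2π. -/

import Mathlib

/-!
On the circle of radius `r`, integrating the tangent-line inequality `e^y ≥ e^t (1 + y - t)`
against the weight `(1 ± sin(kψ + c_k)) / 2`, which isolates the `k`-th term of the series, gives
`∫ e^{2φ} r dψ ≥ π e^{-2M} r^{Q/π + 1} e^{|b_k| r^{-k}}`.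
Finite area therefore makes this lower bound integrable near `r = 0`. The exponential factor beats
every power of `r` unless `b_k = 0`, and the remaining power `r^{Q/π + 1}` is integrable only when
`Q/π + 1 > -1`. The termwise integration needs `∑ |b_n| r^{-n} < ∞`, which follows from pointwise
convergence on a smaller circle by the Cantor–Lebesgue argument.
-/

open MeasureTheory Real Filter Set Topology

theorem integral_cos_int_mul_add {m : ℤ} (hm : m ≠ 0) (e : ℝ) :
    ∫ ψ in (0 : ℝ)..2 * π, cos (m * ψ + e) = 0 := by
  have : ((m : ℝ) * (2 * π) + e) = e + m * (2 * π) := by ring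
  simp [Int.cast_ne_zero.mpr hm, this, sin_add_int_mul_two_pi]

theorem integral_sin_int_mul_add {m : ℤ} (hm : m ≠ 0) (e : ℝ) :
    ∫ ψ in (0 : ℝ)..2 * π, sin (m * ψ + e) = 0 := by
  have := integral_cos_int_mul_add hm (e - π / 2)
  simpa only [← add_sub_assoc, cos_sub_pi_div_two] using this

theorem integral_sin_natCast_add_one_mul_add (n : ℕ) (e : ℝ) :
    ∫ ψ in (0 : ℝ)..2 * π, sin (((n : ℝ) + 1) * ψ + e) = 0 := by
  exact_mod_cast integral_sin_int_mul_add (m := n + 1) (by omega) e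

theorem integral_sin_mul_sin (n k : ℕ) (d e : ℝ) :
    ∫ ψ in (0 : ℝ)..2 * π, sin (((n : ℝ) + 1) * ψ + d) * sin (((k : ℝ) + 1) * ψ + e) =
      if n = k then π * cos (d - e) else 0 := by
  have hprod (ψ : ℝ) : sin (((n : ℝ) + 1) * ψ + d) * sin (((k : ℝ) + 1) * ψ + e) =
      (cos (((n - k : ℤ) : ℝ) * ψ + (d - e)) - cos (((n + k + 2 : ℤ) : ℝ) * ψ + (d + e))) / 2 := by
    rw [show ∀ X Y, sin X * sin Y = (cos (X - Y) - cos (X + Y)) / 2 by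
      intro X Y; rw [cos_sub, cos_add]; ring]
    congr 3 <;> push_cast <;> ring
  have hcont (m : ℤ) (e : ℝ) : IntervalIntegrable (fun ψ => cos (m * ψ + e)) volume 0 (2 * π) :=
    (by fun_prop : Continuous fun ψ : ℝ => cos (m * ψ + e)).intervalIntegrable _ _
  simp_rw [hprod]
  rw [intervalIntegral.integral_div, intervalIntegral.integral_sub (hcont _ _) (hcont _ _),
    integral_cos_int_mul_add (m := n + k + 2) (by omega)]
  split_ifs with h
  · simp [h]
    ring
  · rw [integral_cos_int_mul_add (by omega)]
    simp

theorem integral_one_add_mul_sin_div_two (k : ℕ) (ε e : ℝ) :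
    ∫ ψ in (0 : ℝ)..2 * π, (1 + ε * sin (((k : ℝ) + 1) * ψ + e)) / 2 = π := by
  rw [intervalIntegral.integral_div, intervalIntegral.integral_add intervalIntegrable_const
    ((Continuous.intervalIntegrable (by fun_prop) _ _).const_mul ε),
    intervalIntegral.integral_const_mul, integral_sin_natCast_add_one_mul_add]
  simp

theorem integral_sin_mul_one_add_mul_sin_div_two (n k : ℕ) (ε d e : ℝ) :
    ∫ ψ in (0 : ℝ)..2 * π,
        sin (((n : ℝ) + 1) * ψ + d) * ((1 + ε * sin (((k : ℝ) + 1) * ψ + e)) / 2) =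
      if n = k then ε * π * cos (d - e) / 2 else 0 := by
  simp only [mul_div_assoc', mul_add, mul_one, mul_left_comm _ ε]
  rw [intervalIntegral.integral_div, intervalIntegral.integral_add
    (Continuous.intervalIntegrable (by fun_prop) _ _)
    ((Continuous.intervalIntegrable (by fun_prop) _ _).const_mul ε),
    intervalIntegral.integral_const_mul, integral_sin_natCast_add_one_mul_add, integral_sin_mul_sin]
  split_ifs <;> ring

theorem abs_mul_sin_le (x y : ℝ) : |x * sin y| ≤ |x| := by
  rw [abs_mul]
  exact mul_le_of_le_one_right (abs_nonneg _) (abs_sin_le_one _)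

theorem tendsto_zero_of_tendsto_mul_sin {a c : ℕ → ℝ}
    (h : ∀ ψ, Tendsto (fun n => a n * sin (((n : ℝ) + 1) * ψ + c n)) atTop (𝓝 0)) :
    Tendsto a atTop (𝓝 0) := by
  set m : ℕ → ℝ := fun n => min 1 |a n|
  have hint (n : ℕ) : ∫ ψ in (0 : ℝ)..2 * π, m n * sin (((n : ℝ) + 1) * ψ + c n) ^ 2 = m n * π := by
    simp only [sq, intervalIntegral.integral_const_mul, integral_sin_mul_sin, sub_self,
      cos_zero, mul_one, if_true]
  have hlim : Tendsto (fun n => ∫ ψ in (0 : ℝ)..2 * π, m n * sin (((n : ℝ) + 1) * ψ + c n) ^ 2)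
      atTop (𝓝 (∫ _ in (0 : ℝ)..2 * π, (0 : ℝ))) := by
    refine intervalIntegral.tendsto_integral_filter_of_dominated_convergence (fun _ => 1)
      (.of_forall fun n => (by fun_prop : Continuous _).aestronglyMeasurable)
      (.of_forall fun n => .of_forall fun ψ _ => ?_) intervalIntegrable_const
      (.of_forall fun ψ _ => squeeze_zero (fun n => by positivity) (fun n => ?_)
        (by simpa using (h ψ).abs))
    · rw [norm_of_nonneg (by positivity)]
      exact mul_le_one₀ (min_le_left _ _) (by positivity) (sin_sq_le_one _)
    · rw [← sq_abs]
      exact mul_le_mul (min_le_right _ _)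
        (pow_le_of_le_one (abs_nonneg _) (abs_sin_le_one _) two_ne_zero) (by positivity)
        (abs_nonneg _)
  simp only [hint, intervalIntegral.integral_zero] at hlim
  have hm : Tendsto m atTop (𝓝 0) := by simpa using hlim.div_const π
  refine (tendsto_zero_iff_abs_tendsto_zero a).mpr (hm.congr' ?_)
  filter_upwards [hm.eventually (gt_mem_nhds one_pos)] with n hn
  exact min_eq_right (min_lt_iff.mp hn |>.resolve_left (lt_irrefl 1)).le

theorem summable_abs_mul_inv_pow_of_summable_mul_sin {b c : ℕ → ℝ} {ρ r : ℝ} (hρ : 0 < ρ)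
    (hρr : ρ < r)
    (h : ∀ ψ, Summable fun n => b n * (ρ ^ (n + 1))⁻¹ * sin (((n : ℝ) + 1) * ψ + c n)) :
    Summable fun n => |b n * (r ^ (n + 1))⁻¹| := by
  have hr : 0 < r := hρ.trans hρr
  obtain ⟨C, hC⟩ := (tendsto_zero_of_tendsto_mul_sin fun ψ => (h ψ).tendsto_atTop_zero).abs
    |>.bddAbove_range
  have hgeom : Summable fun n : ℕ => C * (ρ / r) ^ (n + 1) :=
    ((summable_nat_add_iff 1).mpr (summable_geometric_of_lt_one (by positivity)
      ((div_lt_one hr).mpr hρr))).mul_left C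
  refine .of_nonneg_of_le (fun n => abs_nonneg _) (fun n => ?_) hgeom
  calc |b n * (r ^ (n + 1))⁻¹| = |b n * (ρ ^ (n + 1))⁻¹| * (ρ / r) ^ (n + 1) := by
        rw [abs_mul, abs_mul, abs_inv, abs_inv, abs_pow, abs_pow, abs_of_pos hr, abs_of_pos hρ,
          div_pow]
        field_simp
    _ ≤ C * (ρ / r) ^ (n + 1) := by gcongr; exact hC ⟨n, rfl⟩

theorem exp_mul_le_integral_exp_of_weight {α : Type*} [MeasurableSpace α] {μ : Measure α}
    {f w : α → ℝ} (t : ℝ) (hw0 : ∀ x, 0 ≤ w x) (hw1 : ∀ x, w x ≤ 1) (hw : Integrable w μ)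
    (hfw : Integrable (fun x => f x * w x) μ) (hf : Integrable (fun x => exp (f x)) μ) :
    exp t * ((1 - t) * ∫ x, w x ∂μ + ∫ x, f x * w x ∂μ) ≤ ∫ x, exp (f x) ∂μ := by
  have htangent (x : α) : exp t * ((1 - t) * w x + f x * w x) ≤ exp (f x) :=
    calc exp t * ((1 - t) * w x + f x * w x) = exp t * ((f x - t + 1) * w x) := by ring
      _ ≤ exp t * (exp (f x - t) * w x) := by gcongr; exacts [hw0 x, add_one_le_exp _]
      _ ≤ exp t * exp (f x - t) := by gcongr; exact mul_le_of_le_one_right (exp_pos _).le (hw1 x)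
      _ = exp (f x) := by rw [← exp_add, add_sub_cancel]
  calc exp t * ((1 - t) * ∫ x, w x ∂μ + ∫ x, f x * w x ∂μ)
      = ∫ x, exp t * ((1 - t) * w x + f x * w x) ∂μ := by
        rw [integral_const_mul, integral_add (hw.const_mul _) hfw, integral_const_mul]
    _ ≤ ∫ x, exp (f x) ∂μ :=
        integral_mono (((hw.const_mul _).add hfw).const_mul _) hf htangent

theorem neg_one_lt_of_const_mul_rpow_le {g : ℝ → ℝ} {R C s : ℝ} (hR : 0 < R) (hC : 0 < C)
    (hg : IntegrableOn g (Ioo 0 R))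
    (hle : ∀ᵐ r ∂volume.restrict (Ioo 0 R), C * r ^ s ≤ g r) : -1 < s := by
  refine (intervalIntegral.integrableOn_Ioo_rpow_iff hR).mp <| Integrable.mono' (hg.const_mul C⁻¹)
    (by fun_prop : Measurable fun r : ℝ => r ^ s).aestronglyMeasurable ?_
  filter_upwards [hle, ae_restrict_mem measurableSet_Ioo] with r hr hr0
  rwa [norm_of_nonneg (rpow_nonneg hr0.1.le _), le_inv_mul_iff₀ hC]

theorem neg_one_lt_of_const_mul_rpow_mul_exp_le {g : ℝ → ℝ} {R C p a : ℝ} {N : ℕ} (hR : 0 < R)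
    (hC : 0 < C) (hg : IntegrableOn g (Ioo 0 R)) (ha : 0 ≤ a)
    (hle : ∀ᵐ r ∂volume.restrict (Ioo 0 R), C * (r ^ p * exp (a * (r ^ N)⁻¹)) ≤ g r) :
    -1 < p := by
  refine neg_one_lt_of_const_mul_rpow_le hR hC hg ?_
  filter_upwards [hle, ae_restrict_mem measurableSet_Ioo] with r hle_r hr
  have hr0 : 0 < r := hr.1
  refine le_trans ?_ hle_r
  gcongr
  exact le_mul_of_one_le_right (by positivity) (one_le_exp (by positivity))

theorem eq_zero_of_const_mul_rpow_mul_exp_le {g : ℝ → ℝ} {R C p a : ℝ} {N : ℕ} (hR : 0 < R)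
    (hC : 0 < C) (hg : IntegrableOn g (Ioo 0 R)) (ha : 0 ≤ a) (hN : N ≠ 0)
    (hle : ∀ᵐ r ∂volume.restrict (Ioo 0 R), C * (r ^ p * exp (a * (r ^ N)⁻¹)) ≤ g r) :
    a = 0 := by
  by_contra ha0
  have hapos : 0 < a := ha.lt_of_ne' ha0
  set m := ⌈p + 1⌉₊
  -- `exp x ≥ x ^ m / m!` makes `g` dominate `r ^ (p - N m)`, whose exponent is `≤ -1`
  have hlt : -1 < p - (N * m : ℕ) := by
    refine neg_one_lt_of_const_mul_rpow_le hR (C := C * (a ^ m / m.factorial)) (by positivity) hg ?_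
    filter_upwards [hle, ae_restrict_mem measurableSet_Ioo] with r hle_r hr
    have hr0 : 0 < r := hr.1
    refine le_trans ?_ hle_r
    calc C * (a ^ m / m.factorial) * r ^ (p - (N * m : ℕ))
        = C * (r ^ p * ((a * (r ^ N)⁻¹) ^ m / m.factorial)) := by
          rw [rpow_sub hr0, rpow_natCast, pow_mul, mul_pow, inv_pow]
          ring
      _ ≤ C * (r ^ p * exp (a * (r ^ N)⁻¹)) := by
          gcongr
          exact pow_div_factorial_le_exp _ (by positivity) m
  have h1 : p + 1 ≤ m := Nat.le_ceil _
  have h2 : (m : ℝ) ≤ (N * m : ℕ) := by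
    exact_mod_cast Nat.le_mul_of_pos_left m (Nat.pos_of_ne_zero hN)
  linarith

noncomputable def sineSeries (a c : ℕ → ℝ) (ψ : ℝ) : ℝ :=
  ∑' n : ℕ, a n * sin (((n : ℝ) + 1) * ψ + c n)

section sineSeries

variable {a c : ℕ → ℝ}

theorem continuous_sineSeries (ha : Summable fun n => |a n|) : Continuous (sineSeries a c) :=
  continuous_tsum (fun n => by fun_prop) ha fun n ψ => abs_mul_sin_le _ _

theorem hasSum_integral_sineSeries_mul {g : ℝ → ℝ} (ha : Summable fun n => |a n|)
    (hg : Continuous g) (hg1 : ∀ ψ, |g ψ| ≤ 1) :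
    HasSum (fun n => a n * ∫ ψ in (0 : ℝ)..2 * π, sin (((n : ℝ) + 1) * ψ + c n) * g ψ)
      (∫ ψ in (0 : ℝ)..2 * π, sineSeries a c ψ * g ψ) := by
  simp only [← intervalIntegral.integral_const_mul, ← mul_assoc, sineSeries]
  refine intervalIntegral.hasSum_integral_of_dominated_convergence (fun n _ => |a n|)
    (fun n => (by fun_prop : Continuous _).aestronglyMeasurable)
    (fun n => .of_forall fun ψ _ => ?_) (.of_forall fun _ _ => ha)
    intervalIntegrable_const (.of_forall fun ψ _ => ?_)
  · rw [norm_mul, Real.norm_eq_abs]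
    exact mul_le_of_le_one_right (abs_nonneg _) (hg1 ψ) |>.trans' <|
      mul_le_mul_of_nonneg_right (abs_mul_sin_le _ _) (abs_nonneg _)
  · exact (ha.of_nonneg_of_le (fun _ => abs_nonneg _) fun n => abs_mul_sin_le _ _).of_abs.hasSum
      |>.mul_right _

theorem pi_mul_exp_abs_le_integral_exp_sineSeries (ha : Summable fun n => |a n|) (k : ℕ) :
    π * exp |a k| ≤ ∫ ψ in (0 : ℝ)..2 * π, exp (2 * sineSeries a c ψ) := by
  obtain ⟨ε, hε, hεa⟩ : ∃ ε : ℝ, |ε| = 1 ∧ ε * a k = |a k| := by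
    rcases abs_choice (a k) with h | h
    exacts [⟨1, by simp, by simp [h]⟩, ⟨-1, by simp, by simp [h]⟩]
  -- this weight isolates the `k`-th term of the series, with the sign that makes it `|a k|`
  set w : ℝ → ℝ := fun ψ => (1 + ε * sin (((k : ℝ) + 1) * ψ + c k)) / 2
  have hεsin (ψ : ℝ) : |ε * sin (((k : ℝ) + 1) * ψ + c k)| ≤ 1 := by
    simpa [hε] using abs_mul_sin_le ε (((k : ℝ) + 1) * ψ + c k)
  have hw0 (ψ : ℝ) : 0 ≤ w ψ := by have := (abs_le.mp (hεsin ψ)).1; simp only [w]; linarith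
  have hw1 (ψ : ℝ) : w ψ ≤ 1 := by have := (abs_le.mp (hεsin ψ)).2; simp only [w]; linarith
  have hwc : Continuous w := by fun_prop
  have hint_Fw : ∫ ψ in (0 : ℝ)..2 * π, 2 * sineSeries a c ψ * w ψ = π * |a k| := by
    have hsum := (hasSum_integral_sineSeries_mul (c := c) ha hwc fun ψ => by
      rw [abs_of_nonneg (hw0 ψ)]; exact hw1 ψ).tsum_eq
    have hterm (n : ℕ) : a n * ∫ ψ in (0 : ℝ)..2 * π, sin (((n : ℝ) + 1) * ψ + c n) * w ψ =
        if n = k then π * |a k| / 2 else 0 := by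
      rw [integral_sin_mul_one_add_mul_sin_div_two]
      split_ifs with h
      · subst h
        rw [← hεa, sub_self, cos_zero]
        ring
      · rw [mul_zero]
    simp only [hterm, tsum_ite_eq] at hsum
    simp only [mul_assoc, intervalIntegral.integral_const_mul, ← hsum]
    ring
  have h2π : (0 : ℝ) ≤ 2 * π := by positivity
  have hIoc {u : ℝ → ℝ} (hu : Continuous u) : Integrable u (volume.restrict (Ioc 0 (2 * π))) :=
    hu.integrableOn_Ioc
  have hF := continuous_sineSeries (c := c) ha
  have := exp_mul_le_integral_exp_of_weight (f := fun ψ => 2 * sineSeries a c ψ) |a k| hw0 hw1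
    (hIoc hwc) (hIoc (by fun_prop)) (hIoc (by fun_prop))
  rw [← intervalIntegral.integral_of_le h2π, ← intervalIntegral.integral_of_le h2π,
    ← intervalIntegral.integral_of_le h2π, integral_one_add_mul_sin_div_two, hint_Fw] at this
  calc π * exp |a k| = exp |a k| * ((1 - |a k|) * π + π * |a k|) := by ring
    _ ≤ _ := this

end sineSeries

theorem le_integral_exp_cone_slice {φ : ℝ → ℝ} {b c : ℕ → ℝ} {M Q r : ℝ} (hr : 0 < r)
    (hφ : ∀ ψ, |φ ψ| ≤ M) (hb : Summable fun n => |b n * (r ^ (n + 1))⁻¹|)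
    (hint : IntegrableOn (fun ψ => exp (2 * (φ ψ + Q / (2 * π) * log r +
      sineSeries (fun n => b n * (r ^ (n + 1))⁻¹) c ψ)) * r) (Ioo 0 (2 * π))) (k : ℕ) :
    π * exp (-(2 * M)) * (r ^ (Q / π + 1) * exp (|b k| * (r ^ (k + 1))⁻¹)) ≤
      ∫ ψ in Ioo 0 (2 * π), exp (2 * (φ ψ + Q / (2 * π) * log r +
        sineSeries (fun n => b n * (r ^ (n + 1))⁻¹) c ψ)) * r := by
  set F := sineSeries (fun n => b n * (r ^ (n + 1))⁻¹) c
  have hpow : exp (2 * (Q / (2 * π) * log r)) * r = r ^ (Q / π + 1) := by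
    rw [rpow_add_one hr.ne', rpow_def_of_pos hr]
    congr 2
    field_simp
  have hpt (ψ : ℝ) : exp (-(2 * M)) * r ^ (Q / π + 1) * exp (2 * F ψ) ≤
      exp (2 * (φ ψ + Q / (2 * π) * log r + F ψ)) * r := by
    have : -(2 * M) ≤ 2 * φ ψ := by linarith [neg_abs_le (φ ψ), hφ ψ]
    calc exp (-(2 * M)) * r ^ (Q / π + 1) * exp (2 * F ψ)
        ≤ exp (2 * φ ψ) * r ^ (Q / π + 1) * exp (2 * F ψ) := by gcongr
      _ = _ := by rw [← hpow, mul_add, mul_add, exp_add, exp_add]; ring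
  have hF : Continuous fun ψ => exp (-(2 * M)) * r ^ (Q / π + 1) * exp (2 * F ψ) := by
    have := continuous_sineSeries (c := c) hb
    fun_prop
  calc π * exp (-(2 * M)) * (r ^ (Q / π + 1) * exp (|b k| * (r ^ (k + 1))⁻¹))
      = exp (-(2 * M)) * r ^ (Q / π + 1) * (π * exp |b k * (r ^ (k + 1))⁻¹|) := by
        rw [abs_mul, abs_inv, abs_pow, abs_of_pos hr]
        ring
    _ ≤ exp (-(2 * M)) * r ^ (Q / π + 1) * ∫ ψ in (0 : ℝ)..2 * π, exp (2 * F ψ) := by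
        gcongr
        exact pi_mul_exp_abs_le_integral_exp_sineSeries hb k
    _ = ∫ ψ in Ioo 0 (2 * π), exp (-(2 * M)) * r ^ (Q / π + 1) * exp (2 * F ψ) := by
        rw [intervalIntegral.integral_of_le (by positivity), integral_Ioc_eq_integral_Ioo,
          integral_const_mul]
    _ ≤ _ := integral_mono (hF.integrableOn_Icc.mono_set Ioo_subset_Icc_self) hint hpt

theorem finite_conformal_area_of_cone_point_general
    (R Q : ℝ) (hR : 0 < R) (φP : ℝ → ℝ → ℝ) (b c : ℕ → ℝ)
    (hbound : ∃ M : ℝ, ∀ r ψ : ℝ, 0 ≤ r → r ≤ R → |φP r ψ| ≤ M)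
    (hsum : ∀ r ψ : ℝ, 0 < r →
      Summable fun n : ℕ => b (n + 1) * (r ^ (n + 1))⁻¹ * Real.sin (((n : ℝ) + 1) * ψ + c (n + 1)))
    (harea : IntegrableOn
      (fun q : ℝ × ℝ =>
        Real.exp (2 * (φP q.1 q.2 + Q / (2 * π) * Real.log q.1 +
          ∑' n : ℕ, b (n + 1) * (q.1 ^ (n + 1))⁻¹ * Real.sin (((n : ℝ) + 1) * q.2 + c (n + 1)))) * q.1)
      (Set.Ioo (0 : ℝ) R ×ˢ Set.Ioo (0 : ℝ) (2 * π))) :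
    (∀ n : ℕ, 1 ≤ n → b n = 0) ∧ -2 * π < Q := by
  obtain ⟨M, hM⟩ := hbound
  rw [IntegrableOn, Measure.volume_eq_prod, ← Measure.prod_restrict] at harea
  have hC : 0 < π * exp (-(2 * M)) := by positivity
  have hlow (k : ℕ) : ∀ᵐ r ∂volume.restrict (Ioo 0 R),
      π * exp (-(2 * M)) * (r ^ (Q / π + 1) * exp (|b (k + 1)| * (r ^ (k + 1))⁻¹)) ≤
        ∫ ψ in Ioo 0 (2 * π), exp (2 * (φP r ψ + Q / (2 * π) * log r +
          sineSeries (fun n => b (n + 1) * (r ^ (n + 1))⁻¹) (fun n => c (n + 1)) ψ)) * r := by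
    filter_upwards [harea.prod_right_ae, ae_restrict_mem measurableSet_Ioo] with r hslice hr
    exact le_integral_exp_cone_slice hr.1 (fun ψ => hM r ψ hr.1.le hr.2.le)
      (summable_abs_mul_inv_pow_of_summable_mul_sin (half_pos hr.1) (half_lt_self hr.1)
        fun ψ => hsum _ ψ (half_pos hr.1)) hslice k
  refine ⟨fun n hn => ?_, ?_⟩
  · obtain ⟨k, rfl⟩ := Nat.exists_eq_add_of_le' hn
    exact abs_eq_zero.mp <| eq_zero_of_const_mul_rpow_mul_exp_le hR hC
      harea.integral_prod_left (abs_nonneg _) k.succ_ne_zero (hlow k)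
  · have := neg_one_lt_of_const_mul_rpow_mul_exp_le hR hC harea.integral_prod_left
      (abs_nonneg _) (hlow 0)
    have := (lt_div_iff₀ pi_pos).mp (by linarith : -2 < Q / π)
    linarith

/-- A harmonic function on the punctured disk `B_R \ {0}`, written in polar
coordinates in the general form
`φ(r,ψ) = φ_P(r,ψ) + (Q/2π) ln r + Σ_{n≥1} b_n r^{-n} sin(nψ + c_n)`
with `φ_P` continuous and bounded on all of `B_R`: if the conformal area
`∫ e^{2φ} dA = ∫∫ e^{2φ} r dr dψ` is finite, then all `b_n` vanish and
`Q > -2π`. -/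
theorem finite_conformal_area_of_cone_point
    (R Q : ℝ) (hR : 0 < R) (φP : ℝ → ℝ → ℝ) (b c : ℕ → ℝ)
    (hφP : Continuous fun q : ℝ × ℝ => φP q.1 q.2)
    (hbound : ∃ M : ℝ, ∀ r ψ : ℝ, 0 ≤ r → r ≤ R → |φP r ψ| ≤ M)
    (hsum : ∀ r ψ : ℝ, 0 < r →
      Summable fun n : ℕ => b (n + 1) * (r ^ (n + 1))⁻¹ * Real.sin (((n : ℝ) + 1) * ψ + c (n + 1)))
    (harea : IntegrableOn
      (fun q : ℝ × ℝ =>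
        Real.exp (2 * (φP q.1 q.2 + Q / (2 * π) * Real.log q.1 +
          ∑' n : ℕ, b (n + 1) * (q.1 ^ (n + 1))⁻¹ * Real.sin (((n : ℝ) + 1) * q.2 + c (n + 1)))) * q.1)
      (Set.Ioo (0 : ℝ) R ×ˢ Set.Ioo (0 : ℝ) (2 * π))) :
    (∀ n : ℕ, 1 ≤ n → b n = 0) ∧ -2 * π < Q :=
  finite_conformal_area_of_cone_point_general R Q hR φP b c hbound hsum harea
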